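/- Suppose g is strictly increasing and bounded on [0,∞) with positive limit g(∞) > 0 at infinity. Let μ, μ₁, μ₂, μ₃, … be Borel measures on ℝⁿ with 0 < μ(ℝⁿ) < ∞ and 0 < μ_k(ℝⁿ) < ∞, and suppose μ_k → μ weakly. Writing x_c(·) for the unique point where the associated vector field vanishes (which exists and is unique for each of these measures), one has x_c(μ_k) → x_c(μ) as k → ∞. -/

import Mathlib

open MeasureTheory Filter Set Topology

/-- The radial vector field `v(y) = g(|y|) y/|y|` (with `v(0)=0`). -/
noncomputable def radialField {n : ℕ} (g : ℝ → ℝ)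
    (y : EuclideanSpace ℝ (Fin n)) : EuclideanSpace ℝ (Fin n) :=
  (g ‖y‖ / ‖y‖) • y

/-- The vector field `V_ν(x) = ∫ v(x+y) dν(y)`. -/
noncomputable def VField {n : ℕ} (g : ℝ → ℝ)
    (ν : Measure (EuclideanSpace ℝ (Fin n)))
    (x : EuclideanSpace ℝ (Fin n)) : EuclideanSpace ℝ (Fin n) :=
  ∫ y, radialField g (x + y) ∂ν

open Metric
open scoped RealInnerProductSpace

/-!
Integrating translates of the bounded, uniformly continuous and strictly monotone field `v`
(`⟪v a - v b, a - b⟫ > 0` for `a ≠ b`) shows that every `V_ν` is continuous and monotone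
(strictly if `ν ≠ 0`), and that the fields `V_{μ_k}`, whose masses stay bounded, are uniformly
equicontinuous. Weak convergence gives `V_{μ_k} → V_μ` pointwise, hence uniformly on each sphere
`S(x, ε)` around the zero `x` of `V_μ`. On that sphere `⟪V_μ b, b - x⟫ = ⟪V_μ b - V_μ x, b - x⟫`
is positive, hence bounded below, so for large `k` also `⟪V_{μ_k} b, b - x⟫ > 0` on the sphere;
monotonicity of `V_{μ_k}` along rays from `x` then traps its zero inside the ball `B(x, ε)`.
-/

lemma lipschitzWith_inv_max_one_smul {E : Type*} [NormedAddCommGroup E] [NormedSpace ℝ E] :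
    LipschitzWith 2 fun p : E => (max 1 ‖p‖)⁻¹ • p := by
  refine LipschitzWith.of_dist_le_mul fun p q => ?_
  set a := max 1 ‖p‖
  set b := max 1 ‖q‖
  have ha : 1 ≤ a := le_max_left _ _
  have hab : |a - b| ≤ ‖p - q‖ := by
    simpa only [a, b, max_comm (1 : ℝ)] using
      (abs_max_sub_max_le_abs ‖p‖ ‖q‖ 1).trans (abs_norm_sub_norm_le p q)
  have h₁ : ‖a⁻¹ • (p - q)‖ ≤ ‖p - q‖ := by
    rw [norm_smul, norm_inv, Real.norm_of_nonneg (by positivity)]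
    exact mul_le_of_le_one_left (norm_nonneg _) (inv_le_one_of_one_le₀ ha)
  have h₂ : ‖(a⁻¹ - b⁻¹) • q‖ ≤ ‖p - q‖ := by
    have hq : ‖q‖ ≤ b := le_max_right _ _
    rw [norm_smul, inv_sub_inv (by positivity) (by positivity), norm_div, norm_mul,
      Real.norm_of_nonneg (by positivity : 0 ≤ a), Real.norm_of_nonneg (by positivity : 0 ≤ b),
      Real.norm_eq_abs, abs_sub_comm, div_mul_eq_mul_div, div_le_iff₀ (by positivity)]
    calc |a - b| * ‖q‖ ≤ ‖p - q‖ * b := by gcongr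
      _ ≤ ‖p - q‖ * (a * b) := by gcongr; exact le_mul_of_one_le_left (by positivity) ha
  calc dist (a⁻¹ • p) (b⁻¹ • q) = ‖a⁻¹ • (p - q) + (a⁻¹ - b⁻¹) • q‖ := by
        rw [dist_eq_norm]; congr 1; module
    _ ≤ 2 * dist p q := by rw [dist_eq_norm]; exact (norm_add_le _ _).trans (by linarith)

theorem EquicontinuousOn.tendstoUniformlyOn_of_tendsto {ι X α : Type*} [TopologicalSpace X]
    [UniformSpace α] {F : ι → X → α} {f : X → α} {K : Set X} {l : Filter ι}
    (hF : EquicontinuousOn F K) (hK : IsCompact K)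
    (h : ∀ x ∈ K, Tendsto (F · x) l (𝓝 (f x))) : TendstoUniformlyOn F f l K := by
  have := (EquicontinuousOn.tendsto_uniformOnFun_iff_pi' (𝔖 := {K}) (by simpa) (by simpa) l f).2
    (by simpa [tendsto_pi_nhds] using h)
  exact UniformOnFun.tendsto_iff_tendstoUniformlyOn.1 this K rfl

lemma dist_lt_of_forall_inner_pos_on_sphere {E : Type*} [NormedAddCommGroup E]
    [InnerProductSpace ℝ E] {F : E → E} (hF : ∀ a b, 0 ≤ ⟪F a - F b, a - b⟫) {x z : E} {ε : ℝ}
    (hε : 0 < ε) (hpos : ∀ b ∈ sphere x ε, 0 < ⟪F b, b - x⟫) (hz : F z = 0) :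
    dist z x < ε := by
  by_contra! hzx
  rcases hzx.eq_or_lt with hzx | hzx
  · simpa [hz] using hpos z hzx.symm
  have hd : 0 < ‖z - x‖ := by rw [← dist_eq_norm]; linarith
  set s := ε / ‖z - x‖
  have hs : s < 1 := (div_lt_one hd).2 (by rwa [← dist_eq_norm])
  -- `b` is where the segment from `x` to `z` crosses the sphere.
  set b := x + s • (z - x)
  have hb : b ∈ sphere x ε := by
    rw [mem_sphere, dist_eq_norm, add_sub_cancel_left, norm_smul,
      Real.norm_of_nonneg (by positivity), div_mul_cancel₀ _ hd.ne']
  have hbz : 0 < ⟪F b, z - x⟫ := by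
    have := hpos b hb
    rw [add_sub_cancel_left, inner_smul_right] at this
    exact pos_of_mul_pos_right this (by positivity)
  have := hF z b
  rw [hz, zero_sub, show z - b = (1 - s) • (z - x) by simp only [b]; module, inner_neg_left,
    inner_smul_right] at this
  nlinarith

lemma eventually_forall_inner_pos_on_sphere {ι E : Type*} [NormedAddCommGroup E]
    [InnerProductSpace ℝ E] [ProperSpace E] {F : ι → E → E} {f : E → E} {l : Filter ι}
    {x : E} {ε : ℝ} (hf : ContinuousOn f (sphere x ε))
    (hpos : ∀ b ∈ sphere x ε, 0 < ⟪f b, b - x⟫) (hF : TendstoUniformlyOn F f l (sphere x ε)) :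
    ∀ᶠ k in l, ∀ b ∈ sphere x ε, 0 < ⟪F k b, b - x⟫ := by
  obtain ⟨δ, hδ, hfδ⟩ := (isCompact_sphere x ε).exists_forall_le' (f := fun b => ⟪f b, b - x⟫)
    (hf.inner (continuousOn_id.sub continuousOn_const)) hpos
  filter_upwards [Metric.tendstoUniformlyOn_iff.1 hF (δ / (|ε| + 1)) (by positivity)]
    with k hk b hb
  have hbx : ‖b - x‖ = ε := by rw [← dist_eq_norm]; exact hb
  have herr : |⟪f b - F k b, b - x⟫| ≤ δ / (|ε| + 1) * |ε| := by
    refine (abs_real_inner_le_norm _ _).trans ?_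
    rw [hbx, ← dist_eq_norm]
    exact mul_le_mul (hk b hb).le (le_abs_self ε) (hbx ▸ norm_nonneg _) (by positivity)
  have hsmall : δ / (|ε| + 1) * |ε| < δ := by
    rw [div_mul_eq_mul_div, div_lt_iff₀ (by positivity)]
    nlinarith [abs_nonneg ε]
  have hsplit : ⟪F k b, b - x⟫ = ⟪f b, b - x⟫ - ⟪f b - F k b, b - x⟫ := by
    rw [inner_sub_left]; ring
  rw [hsplit]
  linarith [hfδ b hb, le_abs_self ⟪f b - F k b, b - x⟫]

lemma tendsto_integral_of_forall_tendsto_integral_real {κ X ι : Type*} [TopologicalSpace X]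
    [MeasurableSpace X] [OpensMeasurableSpace X] [Fintype ι] {l : Filter κ}
    {μs : κ → Measure X} {μ : Measure X} [∀ k, IsFiniteMeasure (μs k)] [IsFiniteMeasure μ]
    (hweak : ∀ ψ : X → ℝ, Continuous ψ → (∃ C : ℝ, ∀ y, |ψ y| ≤ C) →
      Tendsto (fun k => ∫ y, ψ y ∂(μs k)) l (𝓝 (∫ y, ψ y ∂μ)))
    {F : X → EuclideanSpace ℝ ι} (hF : Continuous F) {C : ℝ} (hC : ∀ y, ‖F y‖ ≤ C) :
    Tendsto (fun k => ∫ y, F y ∂(μs k)) l (𝓝 (∫ y, F y ∂μ)) := by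
  have hcoord (ν : Measure X) [IsFiniteMeasure ν] (i : ι) : (∫ y, F y ∂ν) i = ∫ y, F y i ∂ν :=
    (ContinuousLinearMap.integral_comp_comm (EuclideanSpace.proj i)
      (Integrable.of_bound hF.aestronglyMeasurable C (Eventually.of_forall hC))).symm
  have := (PiLp.continuous_toLp 2 _).tendsto _ |>.comp <| tendsto_pi_nhds.2 fun i =>
    hweak (fun y => F y i) ((EuclideanSpace.proj i).continuous.comp hF)
      ⟨C, fun y => (PiLp.norm_apply_le (F y) i).trans (hC y)⟩
  convert this using 1
  · ext k i
    simp [hcoord]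
  · congr 1
    ext i
    simp [hcoord]

section radialField

variable {n : ℕ} {g : ℝ → ℝ}

lemma norm_radialField (hg0 : g 0 = 0) (y : EuclideanSpace ℝ (Fin n)) :
    ‖radialField g y‖ = |g ‖y‖| := by
  rcases eq_or_ne y 0 with rfl | hy
  · simp [radialField, hg0]
  · rw [radialField, norm_smul, norm_div, norm_norm, Real.norm_eq_abs,
      div_mul_cancel₀ _ (norm_ne_zero_iff.2 hy)]

lemma continuous_radialField (hg_cont : ContinuousOn g (Ici 0)) (hg0 : g 0 = 0) :
    Continuous (radialField (n := n) g) := by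
  refine continuous_iff_continuousAt.2 fun y => ?_
  rcases eq_or_ne y 0 with rfl | hy
  · have hnorm : Tendsto (‖·‖) (𝓝 (0 : EuclideanSpace ℝ (Fin n))) (𝓝[Ici 0] 0) :=
      tendsto_nhdsWithin_iff.2 ⟨tendsto_norm_zero, Eventually.of_forall norm_nonneg⟩
    have hg := ((hg_cont 0 self_mem_Ici).tendsto.comp hnorm).abs
    rw [hg0, abs_zero] at hg
    rw [ContinuousAt, show radialField g (0 : EuclideanSpace ℝ (Fin n)) = 0 by simp [radialField]]
    exact squeeze_zero_norm (fun y => (norm_radialField hg0 y).le) hg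
  · have hy' : 0 < ‖y‖ := norm_pos_iff.2 hy
    exact (((hg_cont.continuousAt (Ici_mem_nhds hy')).comp continuous_norm.continuousAt).div
      continuous_norm.continuousAt hy'.ne').smul continuousAt_id

/-- `radialField g - ginf • r` vanishes at infinity, and `r p = (max 1 ‖p‖)⁻¹ • p` is
Lipschitz. -/
lemma uniformContinuous_radialField (hg_cont : ContinuousOn g (Ici 0)) (hg0 : g 0 = 0)
    {ginf : ℝ} (hg_lim : Tendsto g atTop (𝓝 ginf)) :
    UniformContinuous (radialField (n := n) g) := by
  set r : EuclideanSpace ℝ (Fin n) → EuclideanSpace ℝ (Fin n) := fun p => (max 1 ‖p‖)⁻¹ • p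
  have hr : UniformContinuous r := lipschitzWith_inv_max_one_smul.uniformContinuous
  have hw : Tendsto (fun y => radialField g y - ginf • r y) (cocompact _) (𝓝 0) := by
    have hlim : Tendsto (fun y : EuclideanSpace ℝ (Fin n) => |g ‖y‖ - ginf|) (cocompact _)
        (𝓝 0) := by
      simpa using ((hg_lim.comp tendsto_norm_cocompact_atTop).sub_const ginf).abs
    refine squeeze_zero_norm' ?_ hlim
    filter_upwards [tendsto_norm_cocompact_atTop.eventually_ge_atTop 1] with y hy
    have : radialField g y - ginf • r y = ((g ‖y‖ - ginf) / ‖y‖) • y := by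
      simp only [radialField, r, max_eq_right hy, smul_smul, ← sub_smul, div_eq_mul_inv, sub_mul]
    rw [this, norm_smul, norm_div, norm_norm, Real.norm_eq_abs,
      div_mul_cancel₀ _ (by positivity)]
  have hwc : Continuous fun y => radialField g y - ginf • r y :=
    (continuous_radialField hg_cont hg0).sub (hr.continuous.const_smul ginf)
  have := (hwc.uniformContinuous_of_tendsto_cocompact hw).add (hr.const_smul ginf)
  simpa only [Pi.smul_apply, sub_add_cancel] using this

lemma inner_radialField_sub_radialField_pos (hg0 : g 0 = 0) (hg_mono : StrictMonoOn g (Ici 0))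
    (a b : EuclideanSpace ℝ (Fin n)) (hab : a ≠ b) :
    0 < ⟪radialField g a - radialField g b, a - b⟫ := by
  have hgnn (y : EuclideanSpace ℝ (Fin n)) : 0 ≤ g ‖y‖ :=
    hg0 ▸ hg_mono.monotoneOn self_mem_Ici (norm_nonneg y) (norm_nonneg y)
  have hcancel (y : EuclideanSpace ℝ (Fin n)) : g ‖y‖ / ‖y‖ * ‖y‖ = g ‖y‖ := by
    rcases eq_or_ne ‖y‖ 0 with hy | hy
    · simp [hy, hg0]
    · exact div_mul_cancel₀ _ hy
  rcases eq_or_ne ‖a‖ ‖b‖ with hn | hn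
  · have ha : 0 < ‖a‖ := by
      refine (norm_nonneg a).lt_of_ne fun ha => hab ?_
      have hb : ‖b‖ = 0 := hn ▸ ha.symm
      rw [norm_eq_zero.1 ha.symm, norm_eq_zero.1 hb]
    have hga : 0 < g ‖a‖ := hg0 ▸ hg_mono self_mem_Ici ha.le ha
    have hab' : 0 < ‖a - b‖ := norm_pos_iff.2 (sub_ne_zero.2 hab)
    rw [radialField, radialField, ← hn, ← smul_sub, real_inner_smul_left,
      real_inner_self_eq_norm_sq]
    positivity
  · have hexpand : ⟪radialField g a - radialField g b, a - b⟫ =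
        g ‖a‖ / ‖a‖ * ‖a‖ * ‖a‖ + g ‖b‖ / ‖b‖ * ‖b‖ * ‖b‖
          - (g ‖a‖ / ‖a‖ + g ‖b‖ / ‖b‖) * ⟪a, b⟫ := by
      simp only [radialField, inner_sub_left, inner_sub_right, real_inner_smul_left,
        real_inner_self_eq_norm_mul_norm, real_inner_comm a b]
      ring
    have hgab : 0 < (g ‖a‖ - g ‖b‖) * (‖a‖ - ‖b‖) := by
      rcases hn.lt_or_gt with h | h
      · exact mul_pos_of_neg_of_neg
          (sub_neg.2 (hg_mono (norm_nonneg a) (norm_nonneg b) h)) (sub_neg.2 h)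
      · exact mul_pos (sub_pos.2 (hg_mono (norm_nonneg b) (norm_nonneg a) h)) (sub_pos.2 h)
    have hcs : (g ‖a‖ / ‖a‖ + g ‖b‖ / ‖b‖) * ⟪a, b⟫ ≤
        (g ‖a‖ / ‖a‖ + g ‖b‖ / ‖b‖) * (‖a‖ * ‖b‖) :=
      mul_le_mul_of_nonneg_left (real_inner_le_norm a b)
        (add_nonneg (div_nonneg (hgnn a) (norm_nonneg a)) (div_nonneg (hgnn b) (norm_nonneg b)))
    calc 0 < (g ‖a‖ - g ‖b‖) * (‖a‖ - ‖b‖) := hgab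
      _ = (g ‖a‖ / ‖a‖ * ‖a‖ - g ‖b‖ / ‖b‖ * ‖b‖) * (‖a‖ - ‖b‖) := by rw [hcancel, hcancel]
      _ ≤ _ := by rw [hexpand]; linarith

end radialField

section VField

variable {n : ℕ} {g : ℝ → ℝ} {C : ℝ}

lemma integrable_radialField_comp_add (hv : Continuous (radialField (n := n) g))
    (hC : ∀ y : EuclideanSpace ℝ (Fin n), ‖radialField g y‖ ≤ C)
    (ν : Measure (EuclideanSpace ℝ (Fin n))) [IsFiniteMeasure ν] (a : EuclideanSpace ℝ (Fin n)) :
    Integrable (fun y => radialField g (a + y)) ν :=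
  Integrable.of_bound (hv.comp (continuous_const.add continuous_id)).aestronglyMeasurable C
    (Eventually.of_forall fun y => hC (a + y))

lemma continuous_VField (hv : Continuous (radialField (n := n) g))
    (hC : ∀ y : EuclideanSpace ℝ (Fin n), ‖radialField g y‖ ≤ C)
    (ν : Measure (EuclideanSpace ℝ (Fin n))) [IsFiniteMeasure ν] : Continuous (VField g ν) :=
  continuous_of_dominated (fun a => (integrable_radialField_comp_add hv hC ν a).1)
    (fun _ => ae_of_all _ fun _ => hC _) (integrable_const C)
    (ae_of_all _ fun _ => hv.comp (continuous_id.add continuous_const))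

lemma uniformEquicontinuous_VField {ι : Type*} (hv : UniformContinuous (radialField (n := n) g))
    (hC : ∀ y : EuclideanSpace ℝ (Fin n), ‖radialField g y‖ ≤ C)
    (ν : ι → Measure (EuclideanSpace ℝ (Fin n))) [∀ i, IsFiniteMeasure (ν i)] {B : ℝ}
    (hB : ∀ i, (ν i).real univ ≤ B) :
    UniformEquicontinuous fun i => VField g (ν i) := by
  refine Metric.uniformEquicontinuous_iff.2 fun ε hε => ?_
  obtain ⟨δ, hδ, hvδ⟩ := Metric.uniformContinuous_iff.1 hv (ε / (|B| + 1)) (by positivity)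
  refine ⟨δ, hδ, fun a b hab i => ?_⟩
  have hint := integrable_radialField_comp_add hv.continuous hC (ν i)
  have hclose (y : EuclideanSpace ℝ (Fin n)) :
      ‖radialField g (a + y) - radialField g (b + y)‖ ≤ ε / (|B| + 1) := by
    rw [← dist_eq_norm]
    exact (hvδ (by rwa [dist_add_right])).le
  rw [dist_eq_norm, VField, VField, ← integral_sub (hint a) (hint b)]
  calc _ ≤ ε / (|B| + 1) * (ν i).real univ :=
        norm_integral_le_of_norm_le_const (ae_of_all _ hclose)
    _ ≤ ε / (|B| + 1) * |B| := by gcongr; exact (hB i).trans (le_abs_self B)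
    _ < ε := by
        rw [div_mul_eq_mul_div, div_lt_iff₀ (by positivity)]
        nlinarith [abs_nonneg B]

lemma inner_VField_sub_VField (hv : Continuous (radialField (n := n) g))
    (hC : ∀ y : EuclideanSpace ℝ (Fin n), ‖radialField g y‖ ≤ C)
    (ν : Measure (EuclideanSpace ℝ (Fin n))) [IsFiniteMeasure ν] (a b : EuclideanSpace ℝ (Fin n)) :
    ⟪VField g ν a - VField g ν b, a - b⟫ =
      ∫ y, ⟪radialField g (a + y) - radialField g (b + y), a - b⟫ ∂ν := by
  have hint := integrable_radialField_comp_add hv hC ν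
  rw [VField, VField, ← integral_sub (hint a) (hint b), real_inner_comm,
    ← integral_inner (f := fun y => radialField g (a + y) - radialField g (b + y))
      ((hint a).sub (hint b))]
  simp only [real_inner_comm (a - b)]

lemma inner_VField_sub_VField_nonneg (hv : Continuous (radialField (n := n) g))
    (hC : ∀ y : EuclideanSpace ℝ (Fin n), ‖radialField g y‖ ≤ C)
    (hmono : ∀ a b : EuclideanSpace ℝ (Fin n), a ≠ b →
      0 < ⟪radialField g a - radialField g b, a - b⟫)
    (ν : Measure (EuclideanSpace ℝ (Fin n))) [IsFiniteMeasure ν] (a b : EuclideanSpace ℝ (Fin n)) :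
    0 ≤ ⟪VField g ν a - VField g ν b, a - b⟫ := by
  rw [inner_VField_sub_VField hv hC]
  refine integral_nonneg fun y => ?_
  rcases eq_or_ne a b with rfl | hab
  · simp
  · simpa using (hmono (a + y) (b + y) (by simpa)).le

lemma inner_VField_sub_VField_pos (hv : Continuous (radialField (n := n) g))
    (hC : ∀ y : EuclideanSpace ℝ (Fin n), ‖radialField g y‖ ≤ C)
    (hmono : ∀ a b : EuclideanSpace ℝ (Fin n), a ≠ b →
      0 < ⟪radialField g a - radialField g b, a - b⟫)
    (ν : Measure (EuclideanSpace ℝ (Fin n))) [IsFiniteMeasure ν] (hν : ν ≠ 0)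
    {a b : EuclideanSpace ℝ (Fin n)} (hab : a ≠ b) :
    0 < ⟪VField g ν a - VField g ν b, a - b⟫ := by
  have hpos (y : EuclideanSpace ℝ (Fin n)) :
      0 < ⟪radialField g (a + y) - radialField g (b + y), a - b⟫ := by
    simpa using hmono (a + y) (b + y) (by simpa)
  have hint := integrable_radialField_comp_add hv hC ν
  rw [inner_VField_sub_VField hv hC, integral_pos_iff_support_of_nonneg (fun y => (hpos y).le)
    (((hint a).sub (hint b)).inner_const (a - b))]
  have hsupp : Function.support (fun y => ⟪radialField g (a + y) - radialField g (b + y), a - b⟫)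
      = univ := eq_univ_of_forall fun y => (hpos y).ne'
  rwa [hsupp, Measure.measure_univ_pos]

end VField

theorem center_of_mass_continuous_dependence_general {n : ℕ}
    (g : ℝ → ℝ) (hg_cont : ContinuousOn g (Ici 0)) (hg0 : g 0 = 0)
    (hg_mono : StrictMonoOn g (Ici 0))
    (hg_bdd : ∃ C : ℝ, ∀ r : ℝ, 0 ≤ r → |g r| ≤ C)
    (ginf : ℝ) (hg_lim : Tendsto g atTop (𝓝 ginf))
    (μ : Measure (EuclideanSpace ℝ (Fin n)))
    (μs : ℕ → Measure (EuclideanSpace ℝ (Fin n)))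
    (hμpos : 0 < μ Set.univ) (hμfin : μ Set.univ < ⊤)
    (hμsfin : ∀ k, μs k Set.univ < ⊤)
    (hweak : ∀ ψ : EuclideanSpace ℝ (Fin n) → ℝ, Continuous ψ →
      (∃ C : ℝ, ∀ y, |ψ y| ≤ C) →
      Tendsto (fun k => ∫ y, ψ y ∂(μs k)) atTop (𝓝 (∫ y, ψ y ∂μ)))
    (xc : ℕ → EuclideanSpace ℝ (Fin n)) (x : EuclideanSpace ℝ (Fin n))
    (hxc : ∀ k, VField g (μs k) (xc k) = 0) (hx : VField g μ x = 0) :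
    Tendsto xc atTop (𝓝 x) := by
  obtain ⟨C, hC⟩ := hg_bdd
  have : IsFiniteMeasure μ := ⟨hμfin⟩
  have (k : ℕ) : IsFiniteMeasure (μs k) := ⟨hμsfin k⟩
  have hv := continuous_radialField (n := n) hg_cont hg0
  have hvC (y : EuclideanSpace ℝ (Fin n)) : ‖radialField g y‖ ≤ C :=
    (norm_radialField hg0 y).trans_le (hC _ (norm_nonneg y))
  have hmono := inner_radialField_sub_radialField_pos (n := n) hg0 hg_mono
  obtain ⟨B, hB⟩ : ∃ B, ∀ k, (μs k).real univ ≤ B := by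
    have hmass := hweak (fun _ => 1) continuous_const ⟨1, fun _ => by simp⟩
    simp only [integral_const, smul_eq_mul, mul_one] at hmass
    obtain ⟨B, hB⟩ := hmass.bddAbove_range
    exact ⟨B, fun k => hB (mem_range_self k)⟩
  have hequi := uniformEquicontinuous_VField (uniformContinuous_radialField hg_cont hg0 hg_lim)
    hvC μs hB
  refine Metric.tendsto_nhds.2 fun ε hε => ?_
  have hunif := (hequi.equicontinuous.equicontinuousOn _).tendstoUniformlyOn_of_tendsto
    (isCompact_sphere x ε) fun a _ => tendsto_integral_of_forall_tendsto_integral_real hweak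
      (hv.comp (continuous_const.add continuous_id)) (fun y => hvC (a + y))
  have hpos (b) (hb : b ∈ sphere x ε) : 0 < ⟪VField g μ b, b - x⟫ := by
    simpa [hx] using inner_VField_sub_VField_pos hv hvC hmono μ
      (Measure.measure_univ_pos.1 hμpos) (ne_of_mem_sphere hb hε.ne')
  filter_upwards [eventually_forall_inner_pos_on_sphere (continuous_VField hv hvC μ).continuousOn
    hpos hunif] with k hk
  exact dist_lt_of_forall_inner_pos_on_sphere
    (inner_VField_sub_VField_nonneg hv hvC hmono (μs k)) hε hk (hxc k)

theorem center_of_mass_continuous_dependence {n : ℕ} (hn : 1 ≤ n)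
    (g : ℝ → ℝ) (hg_cont : ContinuousOn g (Ici 0)) (hg0 : g 0 = 0)
    (hg_mono : StrictMonoOn g (Ici 0))
    (hg_bdd : ∃ C : ℝ, ∀ r : ℝ, 0 ≤ r → |g r| ≤ C)
    (ginf : ℝ) (hginf_pos : 0 < ginf) (hg_lim : Tendsto g atTop (𝓝 ginf))
    (μ : Measure (EuclideanSpace ℝ (Fin n)))
    (μs : ℕ → Measure (EuclideanSpace ℝ (Fin n)))
    (hμpos : 0 < μ Set.univ) (hμfin : μ Set.univ < ⊤)
    (hμspos : ∀ k, 0 < μs k Set.univ) (hμsfin : ∀ k, μs k Set.univ < ⊤)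
    (hweak : ∀ ψ : EuclideanSpace ℝ (Fin n) → ℝ, Continuous ψ →
      (∃ C : ℝ, ∀ y, |ψ y| ≤ C) →
      Tendsto (fun k => ∫ y, ψ y ∂(μs k)) atTop (𝓝 (∫ y, ψ y ∂μ)))
    (xc : ℕ → EuclideanSpace ℝ (Fin n)) (x : EuclideanSpace ℝ (Fin n))
    (hxc : ∀ k, VField g (μs k) (xc k) = 0) (hx : VField g μ x = 0) :
    Tendsto xc atTop (𝓝 x) :=
  center_of_mass_continuous_dependence_general g hg_cont hg0 hg_mono hg_bdd ginf hg_lim μ μs hμpos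
    hμfin hμsfin hweak xc x hxc hx
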